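/- arXiv:1704.06966 — 4 statements merged into one kernel-verified Lean document; each statement's English description precedes it below -/
import Mathlib

section
/- Let 𝓗 be a complex Hilbert space and let χ, χ̄, T, W be bounded linear operators on 𝓗 such that χ and χ̄ commute with each other and with T, and χ² + χ̄² = 1. Set H := T + W and H_χ̄ := T + χ̄Wχ̄; note that both T and H_χ̄ map the subspace Ran χ̄ into itself. Assume that T restricts to a bijection of Ran χ̄ onto itself and that H_χ̄ restricts to a bijection of Ran χ̄ onto itself, and let J : Ran χ̄ → Ran χ̄ denote the inverse of the restriction of H_χ̄. Define the smooth Feshbach operator F := T + χWχ − χW χ̄ (J(χ̄ W χ ·)) (well defined since χ̄Wχ maps 𝓗 into Ran χ̄) and the auxiliary operator Q := χ − χ̄ (J(χ̄ W χ ·)). Then for every ψ ∈ 𝓗 with Hψ = 0 one has F(χψ) = 0 and Q(χψ) = ψ; in particular χ maps ker H injectively into ker F. -/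
/-! If `(T + W) ψ = 0`, the identity `χ² + χ̄² = 1` and `[χ̄, T] = 0` give
`H_χ̄ (χ̄ ψ) = -χ̄ W χ (χ ψ)`, so the resolvent term in `F` and `Q` evaluates to
`J (χ̄ W χ (χ ψ)) = -χ̄ ψ`. Then `Q (χ ψ) = χ² ψ + χ̄² ψ = ψ` and
`F (χ ψ) = χ (T + W χ² + W χ̄²) ψ = χ (T + W) ψ = 0`; injectivity follows since `Q ∘ χ` is
the identity on `ker H`. -/

section Ring
variable {A : Type*} [Ring A] {χ χb T W : A}

theorem mul_self_eq_one_sub_of_sq_add_sq (hsum : χ ^ 2 + χb ^ 2 = 1) : χb * χb = 1 - χ * χ := by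
  rw [← hsum, pow_two, pow_two, add_sub_cancel_left]

theorem restricted_mul_chiBar (hχbT : χb * T = T * χb) (hsum : χ ^ 2 + χb ^ 2 = 1) :
    (T + χb * W * χb) * χb = χb * (T + W) - χb * W * χ * χ := by
  rw [add_mul, ← hχbT, mul_assoc (χb * W), mul_self_eq_one_sub_of_sq_add_sq hsum]
  noncomm_ring

theorem feshbach_mul_chi (hχT : χ * T = T * χ) (hsum : χ ^ 2 + χb ^ 2 = 1) :
    T * χ + χ * W * χ * χ + χ * W * χb * χb = χ * (T + W) := by
  rw [← hχT, mul_assoc (χ * W) χb, mul_self_eq_one_sub_of_sq_add_sq hsum]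
  noncomm_ring

end Ring

section Operator
variable {R M : Type*} [Ring R] [TopologicalSpace M] [AddCommGroup M] [Module R M]
  [IsTopologicalAddGroup M]
  {χ χb T W : M →L[R] M} {J : M → M} {ψ : M}

theorem resolvent_apply_of_mem_ker (hχbT : χb * T = T * χb) (hsum : χ ^ 2 + χb ^ 2 = 1)
    (hJright : ∀ x ∈ LinearMap.range (χb : M →ₗ[R] M), J ((T + χb * W * χb) x) = x)
    (hψ : (T + W) ψ = 0) : J (χb (W (χ (χ ψ)))) = -χb ψ := by
  have hHχb : (T + χb * W * χb) (-χb ψ) = χb (W (χ (χ ψ))) := by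
    have h := congr($(restricted_mul_chiBar (W := W) hχbT hsum) ψ)
    simp only [mul_apply_eq_comp, sub_apply, hψ, map_zero, zero_sub] at h
    rw [map_neg, h, neg_neg]
  rw [← hHχb, hJright _ ⟨-ψ, by simp⟩]

theorem auxiliary_apply_chi_of_mem_ker (hχbT : χb * T = T * χb) (hsum : χ ^ 2 + χb ^ 2 = 1)
    (hJright : ∀ x ∈ LinearMap.range (χb : M →ₗ[R] M), J ((T + χb * W * χb) x) = x)
    (hψ : (T + W) ψ = 0) : χ (χ ψ) - χb (J (χb (W (χ (χ ψ))))) = ψ := by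
  rw [resolvent_apply_of_mem_ker hχbT hsum hJright hψ, map_neg, sub_neg_eq_add]
  simpa [pow_two] using congr($hsum ψ)

theorem feshbach_apply_chi_of_mem_ker (hχT : χ * T = T * χ) (hχbT : χb * T = T * χb)
    (hsum : χ ^ 2 + χb ^ 2 = 1)
    (hJright : ∀ x ∈ LinearMap.range (χb : M →ₗ[R] M), J ((T + χb * W * χb) x) = x)
    (hψ : (T + W) ψ = 0) :
    T (χ ψ) + χ (W (χ (χ ψ))) - χ (W (χb (J (χb (W (χ (χ ψ))))))) = 0 := by
  rw [resolvent_apply_of_mem_ker hχbT hsum hJright hψ, map_neg, map_neg, map_neg, sub_neg_eq_add]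
  simpa [hψ, add_assoc] using congr($(feshbach_mul_chi (W := W) hχT hsum) ψ)

end Operator

theorem smooth_feshbach_forward_general
    {𝓗 : Type*} [NormedAddCommGroup 𝓗] [InnerProductSpace ℂ 𝓗]
    (χ χb T W : 𝓗 →L[ℂ] 𝓗)
    (hχT : χ * T = T * χ) (hχbT : χb * T = T * χb)
    (hsum : χ ^ 2 + χb ^ 2 = 1)
    (J : 𝓗 → 𝓗)
    (hJright : ∀ x ∈ LinearMap.range (χb : 𝓗 →ₗ[ℂ] 𝓗), J ((T + χb * W * χb) x) = x)
    (F Q : 𝓗 → 𝓗)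
    (hF : ∀ v, F v = T v + χ (W (χ v)) - χ (W (χb (J (χb (W (χ v)))))))
    (hQ : ∀ v, Q v = χ v - χb (J (χb (W (χ v))))) :
    ∀ ψ : 𝓗, (T + W) ψ = 0 →
      F (χ ψ) = 0 ∧ Q (χ ψ) = ψ ∧
        (∀ ψ' : 𝓗, (T + W) ψ' = 0 → χ ψ = χ ψ' → ψ = ψ') := by
  have hQχ : ∀ ψ, (T + W) ψ = 0 → Q (χ ψ) = ψ := fun ψ hψ => by
    rw [hQ, auxiliary_apply_chi_of_mem_ker hχbT hsum hJright hψ]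
  intro ψ hψ
  refine ⟨?_, hQχ ψ hψ, fun ψ' hψ' hχψ => ?_⟩
  · rw [hF, feshbach_apply_chi_of_mem_ker hχT hχbT hsum hJright hψ]
  · rw [← hQχ ψ hψ, ← hQχ ψ' hψ', hχψ]

/-- **Smooth Feshbach isospectrality, forward direction.**
Given a smoothed projection pair `χ, χb` (commuting, `χ² + χb² = 1`) commuting with `T`,
with `H = T + W`, `Hχb = T + χb W χb`, such that `T` and `Hχb` restrict to bijections of
`Ran χb` onto itself, and `J` the inverse of the restriction of `Hχb`, define the Feshbach
operator `F v = T v + χWχ v − χW χb (J (χb W χ v))` and `Q v = χ v − χb (J (χb W χ v))`.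
Then `Hψ = 0` implies `F (χψ) = 0` and `Q (χψ) = ψ`; in particular `χ` is injective on
`ker H`. -/
theorem smooth_feshbach_forward
    {𝓗 : Type*} [NormedAddCommGroup 𝓗] [InnerProductSpace ℂ 𝓗] [CompleteSpace 𝓗]
    (χ χb T W : 𝓗 →L[ℂ] 𝓗)
    (hcomm : χ * χb = χb * χ)
    (hχT : χ * T = T * χ) (hχbT : χb * T = T * χb)
    (hsum : χ ^ 2 + χb ^ 2 = 1)
    (hTbij : Set.BijOn T ((LinearMap.range (χb : 𝓗 →ₗ[ℂ] 𝓗) : Submodule ℂ 𝓗) : Set 𝓗)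
      ((LinearMap.range (χb : 𝓗 →ₗ[ℂ] 𝓗) : Submodule ℂ 𝓗) : Set 𝓗))
    (hHbij : Set.BijOn (T + χb * W * χb) ((LinearMap.range (χb : 𝓗 →ₗ[ℂ] 𝓗) : Submodule ℂ 𝓗) : Set 𝓗)
      ((LinearMap.range (χb : 𝓗 →ₗ[ℂ] 𝓗) : Submodule ℂ 𝓗) : Set 𝓗))
    (J : 𝓗 → 𝓗)
    (hJmem : ∀ x ∈ LinearMap.range (χb : 𝓗 →ₗ[ℂ] 𝓗), J x ∈ LinearMap.range (χb : 𝓗 →ₗ[ℂ] 𝓗))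
    (hJleft : ∀ x ∈ LinearMap.range (χb : 𝓗 →ₗ[ℂ] 𝓗), (T + χb * W * χb) (J x) = x)
    (hJright : ∀ x ∈ LinearMap.range (χb : 𝓗 →ₗ[ℂ] 𝓗), J ((T + χb * W * χb) x) = x)
    (F Q : 𝓗 → 𝓗)
    (hF : ∀ v, F v = T v + χ (W (χ v)) - χ (W (χb (J (χb (W (χ v)))))))
    (hQ : ∀ v, Q v = χ v - χb (J (χb (W (χ v))))) :
    ∀ ψ : 𝓗, (T + W) ψ = 0 →
      F (χ ψ) = 0 ∧ Q (χ ψ) = ψ ∧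
        (∀ ψ' : 𝓗, (T + W) ψ' = 0 → χ ψ = χ ψ' → ψ = ψ') :=
  smooth_feshbach_forward_general χ χb T W hχT hχbT hsum J hJright F Q hF hQ
end

section
/- Let 𝓗 be a complex Hilbert space and let χ, χ̄, T, W be bounded linear operators on 𝓗 such that χ and χ̄ commute with each other and with T, and χ² + χ̄² = 1. Set H := T + W and H_χ̄ := T + χ̄Wχ̄; note that both T and H_χ̄ map the subspace Ran χ̄ into itself. Assume that T restricts to a bijection of Ran χ̄ onto itself and that H_χ̄ restricts to a bijection of Ran χ̄ onto itself, and let J : Ran χ̄ → Ran χ̄ denote the inverse of the restriction of H_χ̄. Define the smooth Feshbach operator F := T + χWχ − χW χ̄ (J(χ̄ W χ ·)) and the auxiliary operator Q := χ − χ̄ (J(χ̄ W χ ·)). Then for every φ ∈ 𝓗 with Fφ = 0 one has H(Qφ) = 0 and χ(Qφ) = φ; in particular Q maps ker F injectively into ker H, and together with the reverse direction, χ : ker H → ker F and Q : ker F → ker H are linear isomorphisms inverse to each other. -/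
/-!
Write `u = J (χb W χ φ)`, so that `Q φ = χ φ - χb u`. Two identities drive the argument:
`F φ = T φ + χ W (Q φ)`, and `T u = χb W (Q φ)` by the defining equation `H_χb u = χb W χ φ`.
Commuting `χ, χb` past `T`, the second gives `T (Q φ) = χ T φ - χb² W (Q φ)`. If `F φ = 0`,
then `T φ = -χ W (Q φ)`, so `H (Q φ) = (1 - χ² - χb²) W (Q φ) = 0`. Consequently
`T (φ - χ Q φ) = T φ + χ W (Q φ) = F φ = 0`, and `φ - χ Q φ = χb (χb φ + χ u)` lies in `Ran χb`,
where `T` is injective. The forward direction is the observation that `H_χb (-χb ψ) = χb W χ² ψ`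
whenever `H ψ = 0`.
-/

theorem Module.End.apply_comm {R M : Type*} [Semiring R] [AddCommMonoid M] [Module R M]
    {f g : Module.End R M} (h : Commute f g) (v : M) : f (g v) = g (f v) :=
  LinearMap.congr_fun h v

namespace SmoothFeshbach

open Module.End (apply_comm)

variable {R M : Type*} [Ring R] [AddCommGroup M] [Module R M]

theorem apply_apply_add_apply_apply {χ χb : Module.End R M} (hsum : χ ^ 2 + χb ^ 2 = 1)
    (v : M) : χ (χ v) + χb (χb v) = v := by
  simpa only [sq, LinearMap.add_apply, Module.End.mul_apply, Module.End.one_apply] using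
    LinearMap.congr_fun hsum v

/-- `F_χ(T + W, T)`, with `J` in place of `H_χb⁻¹` on `Ran χb`; `feshbachAux` is `Q_χ`. -/
def feshbachMap (χ χb T W : Module.End R M) (J : M → M) (v : M) : M :=
  T v + χ (W (χ v)) - χ (W (χb (J (χb (W (χ v))))))

def feshbachAux (χ χb W : Module.End R M) (J : M → M) (v : M) : M :=
  χ v - χb (J (χb (W (χ v))))

variable {χ χb T W : Module.End R M} {J : M → M}

theorem feshbachMap_eq (v : M) :
    feshbachMap χ χb T W J v = T v + χ (W (feshbachAux χ χb W J v)) := by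
  simp only [feshbachMap, feshbachAux, map_sub]
  abel

theorem T_apply_feshbachAux (hχT : Commute χ T) (hχbT : Commute χb T)
    (hJleft : ∀ x ∈ LinearMap.range χb, (T + χb * W * χb) (J x) = x) (v : M) :
    T (feshbachAux χ χb W J v) = χ (T v) - χb (χb (W (feshbachAux χ χb W J v))) := by
  have hu := hJleft _ (LinearMap.mem_range_self χb (W (χ v)))
  simp only [LinearMap.add_apply, Module.End.mul_apply] at hu
  rw [feshbachAux, map_sub, ← apply_comm hχT, ← apply_comm hχbT, eq_sub_of_add_eq hu]
  simp only [map_sub]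

theorem sub_apply_feshbachAux_mem_range (hcomm : Commute χ χb) (hsum : χ ^ 2 + χb ^ 2 = 1)
    (v : M) : v - χ (feshbachAux χ χb W J v) ∈ LinearMap.range χb := by
  refine ⟨χb v + χ (J (χb (W (χ v)))), ?_⟩
  rw [feshbachAux, map_add, map_sub, apply_comm hcomm]
  linear_combination (norm := module) apply_apply_add_apply_apply hsum v

theorem feshbachAux_mem_ker_of_feshbachMap_eq_zero (hχT : Commute χ T) (hχbT : Commute χb T)
    (hsum : χ ^ 2 + χb ^ 2 = 1)
    (hJleft : ∀ x ∈ LinearMap.range χb, (T + χb * W * χb) (J x) = x)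
    {φ : M} (hφ : feshbachMap χ χb T W J φ = 0) :
    (T + W) (feshbachAux χ χb W J φ) = 0 := by
  have hTφ : T φ = -χ (W (feshbachAux χ χb W J φ)) :=
    eq_neg_of_add_eq_zero_left ((feshbachMap_eq φ).symm.trans hφ)
  rw [LinearMap.add_apply, T_apply_feshbachAux hχT hχbT hJleft, hTφ, map_neg]
  linear_combination (norm := module)
    -apply_apply_add_apply_apply hsum (W (feshbachAux χ χb W J φ))

theorem apply_feshbachAux_of_feshbachMap_eq_zero (hcomm : Commute χ χb) (hχT : Commute χ T)
    (hχbT : Commute χb T)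
    (hsum : χ ^ 2 + χb ^ 2 = 1) (hTinj : Set.InjOn T (LinearMap.range χb))
    (hJleft : ∀ x ∈ LinearMap.range χb, (T + χb * W * χb) (J x) = x)
    {φ : M} (hφ : feshbachMap χ χb T W J φ = 0) :
    χ (feshbachAux χ χb W J φ) = φ := by
  have hTQ : T (feshbachAux χ χb W J φ) = -W (feshbachAux χ χb W J φ) :=
    eq_neg_of_add_eq_zero_left
      (feshbachAux_mem_ker_of_feshbachMap_eq_zero hχT hχbT hsum hJleft hφ)
  have hker : T (φ - χ (feshbachAux χ χb W J φ)) = T 0 := by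
    rw [map_sub, ← apply_comm hχT, hTQ, map_neg, sub_neg_eq_add, ← feshbachMap_eq, hφ, map_zero]
  exact (sub_eq_zero.mp (hTinj (sub_apply_feshbachAux_mem_range hcomm hsum φ)
    (LinearMap.range χb).zero_mem hker)).symm

theorem J_apply_eq_neg (hχbT : Commute χb T) (hsum : χ ^ 2 + χb ^ 2 = 1)
    (hJright : ∀ x ∈ LinearMap.range χb, J ((T + χb * W * χb) x) = x)
    {ψ : M} (hψ : (T + W) ψ = 0) :
    J (χb (W (χ (χ ψ)))) = -χb ψ := by
  have hTψ : T ψ = -W ψ := eq_neg_of_add_eq_zero_left hψ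
  have hH : (T + χb * W * χb) (-χb ψ) = χb (W (χ (χ ψ))) := by
    rw [LinearMap.add_apply, Module.End.mul_apply, Module.End.mul_apply, map_neg, map_neg,
      ← apply_comm hχbT, hTψ, eq_sub_of_add_eq (apply_apply_add_apply_apply hsum ψ)]
    simp only [map_sub, map_neg]
    abel
  rw [← hH]
  exact hJright _ (neg_mem (LinearMap.mem_range_self χb ψ))

theorem feshbachAux_apply_of_mem_ker (hχbT : Commute χb T) (hsum : χ ^ 2 + χb ^ 2 = 1)
    (hJright : ∀ x ∈ LinearMap.range χb, J ((T + χb * W * χb) x) = x)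
    {ψ : M} (hψ : (T + W) ψ = 0) :
    feshbachAux χ χb W J (χ ψ) = ψ := by
  rw [feshbachAux, J_apply_eq_neg hχbT hsum hJright hψ, map_neg, sub_neg_eq_add,
    apply_apply_add_apply_apply hsum]

theorem feshbachMap_apply_of_mem_ker (hχT : Commute χ T) (hχbT : Commute χb T)
    (hsum : χ ^ 2 + χb ^ 2 = 1)
    (hJright : ∀ x ∈ LinearMap.range χb, J ((T + χb * W * χb) x) = x)
    {ψ : M} (hψ : (T + W) ψ = 0) :
    feshbachMap χ χb T W J (χ ψ) = 0 := by
  rw [feshbachMap_eq, feshbachAux_apply_of_mem_ker hχbT hsum hJright hψ, ← apply_comm hχT,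
    ← map_add, ← LinearMap.add_apply, hψ, map_zero]

end SmoothFeshbach

open SmoothFeshbach in
theorem smooth_feshbach_reverse_general
    {𝓗 : Type*} [NormedAddCommGroup 𝓗] [InnerProductSpace ℂ 𝓗]
    (χ χb T W : 𝓗 →L[ℂ] 𝓗)
    (hcomm : χ * χb = χb * χ)
    (hχT : χ * T = T * χ) (hχbT : χb * T = T * χb)
    (hsum : χ ^ 2 + χb ^ 2 = 1)
    (hTbij : Set.BijOn T ((LinearMap.range (χb : 𝓗 →ₗ[ℂ] 𝓗) : Submodule ℂ 𝓗) : Set 𝓗)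
      ((LinearMap.range (χb : 𝓗 →ₗ[ℂ] 𝓗) : Submodule ℂ 𝓗) : Set 𝓗))
    (J : 𝓗 → 𝓗)
    (hJleft : ∀ x ∈ LinearMap.range (χb : 𝓗 →ₗ[ℂ] 𝓗), (T + χb * W * χb) (J x) = x)
    (hJright : ∀ x ∈ LinearMap.range (χb : 𝓗 →ₗ[ℂ] 𝓗), J ((T + χb * W * χb) x) = x)
    (F Q : 𝓗 → 𝓗)
    (hF : ∀ v, F v = T v + χ (W (χ v)) - χ (W (χb (J (χb (W (χ v)))))))
    (hQ : ∀ v, Q v = χ v - χb (J (χb (W (χ v))))) :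
    (∀ φ : 𝓗, F φ = 0 →
      (T + W) (Q φ) = 0 ∧ χ (Q φ) = φ ∧
        (∀ φ' : 𝓗, F φ' = 0 → Q φ = Q φ' → φ = φ')) ∧
    (∀ ψ : 𝓗, (T + W) ψ = 0 → F (χ ψ) = 0 ∧ Q (χ ψ) = ψ) := by
  let L := ContinuousLinearMap.toLinearMapRingHom (R₁ := ℂ) (M₁ := 𝓗)
  have hsum' : L χ ^ 2 + L χb ^ 2 = 1 := by
    simpa only [map_add, map_pow, map_one] using congrArg L hsum
  obtain rfl : F = feshbachMap (L χ) (L χb) (L T) (L W) J := funext hF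
  obtain rfl : Q = feshbachAux (L χ) (L χb) (L W) J := funext hQ
  have hχT' := Commute.map hχT L
  have hχbT' := Commute.map hχbT L
  have hχQ := fun φ : 𝓗 => apply_feshbachAux_of_feshbachMap_eq_zero (φ := φ)
    (Commute.map hcomm L) hχT' hχbT' hsum' hTbij.injOn hJleft
  refine ⟨fun φ hφ => ⟨?_, hχQ φ hφ, fun φ' hφ' hQφ => ?_⟩, fun ψ hψ => ⟨?_, ?_⟩⟩
  · exact feshbachAux_mem_ker_of_feshbachMap_eq_zero hχT' hχbT' hsum' hJleft hφ
  · rw [← hχQ φ hφ, ← hχQ φ' hφ']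
    exact congrArg _ hQφ
  · exact feshbachMap_apply_of_mem_ker hχT' hχbT' hsum' hJright hψ
  · exact feshbachAux_apply_of_mem_ker hχbT' hsum' hJright hψ

/-- **Smooth Feshbach isospectrality, reverse direction.**
With the same setup as the forward direction (smoothed projection pair `χ, χb` commuting
with `T`, `H = T + W`, `Hχb = T + χb W χb` restricting to bijections of `Ran χb`,
`J` the inverse of the restriction of `Hχb`, Feshbach operator
`F v = T v + χWχ v − χW χb (J (χb W χ v))`, auxiliary operator
`Q v = χ v − χb (J (χb W χ v))`): if `Fφ = 0` then `H (Qφ) = 0` and `χ (Qφ) = φ`;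
in particular `Q` is injective on `ker F`, and together with the forward direction
(`Hψ = 0 → F(χψ) = 0 ∧ Q(χψ) = ψ`), `χ : ker H → ker F` and `Q : ker F → ker H` are
inverse to each other. -/
theorem smooth_feshbach_reverse
    {𝓗 : Type*} [NormedAddCommGroup 𝓗] [InnerProductSpace ℂ 𝓗] [CompleteSpace 𝓗]
    (χ χb T W : 𝓗 →L[ℂ] 𝓗)
    (hcomm : χ * χb = χb * χ)
    (hχT : χ * T = T * χ) (hχbT : χb * T = T * χb)
    (hsum : χ ^ 2 + χb ^ 2 = 1)
    (hTbij : Set.BijOn T ((LinearMap.range (χb : 𝓗 →ₗ[ℂ] 𝓗) : Submodule ℂ 𝓗) : Set 𝓗)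
      ((LinearMap.range (χb : 𝓗 →ₗ[ℂ] 𝓗) : Submodule ℂ 𝓗) : Set 𝓗))
    (hHbij : Set.BijOn (T + χb * W * χb) ((LinearMap.range (χb : 𝓗 →ₗ[ℂ] 𝓗) : Submodule ℂ 𝓗) : Set 𝓗)
      ((LinearMap.range (χb : 𝓗 →ₗ[ℂ] 𝓗) : Submodule ℂ 𝓗) : Set 𝓗))
    (J : 𝓗 → 𝓗)
    (hJmem : ∀ x ∈ LinearMap.range (χb : 𝓗 →ₗ[ℂ] 𝓗), J x ∈ LinearMap.range (χb : 𝓗 →ₗ[ℂ] 𝓗))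
    (hJleft : ∀ x ∈ LinearMap.range (χb : 𝓗 →ₗ[ℂ] 𝓗), (T + χb * W * χb) (J x) = x)
    (hJright : ∀ x ∈ LinearMap.range (χb : 𝓗 →ₗ[ℂ] 𝓗), J ((T + χb * W * χb) x) = x)
    (F Q : 𝓗 → 𝓗)
    (hF : ∀ v, F v = T v + χ (W (χ v)) - χ (W (χb (J (χb (W (χ v)))))))
    (hQ : ∀ v, Q v = χ v - χb (J (χb (W (χ v))))) :
    (∀ φ : 𝓗, F φ = 0 →
      (T + W) (Q φ) = 0 ∧ χ (Q φ) = φ ∧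
        (∀ φ' : 𝓗, F φ' = 0 → Q φ = Q φ' → φ = φ')) ∧
    (∀ ψ : 𝓗, (T + W) ψ = 0 → F (χ ψ) = 0 ∧ Q (χ ψ) = ψ) :=
  smooth_feshbach_reverse_general χ χb T W hcomm hχT hχbT hsum hTbij J hJleft hJright F Q hF hQ
end

section
/- Let 𝓗 be a complex Hilbert space and let χ, χ̄, T, W be bounded linear operators on 𝓗 such that χ and χ̄ commute with each other and with T, χ² + χ̄² = 1, ‖χ‖ ≤ 1 and ‖χ̄‖ ≤ 1. Let 0 < ρ ≤ 1 and let M denote the closure of Ran χ̄, which is invariant under T. Assume that T restricts to a bijection of M onto itself whose inverse J_T satisfies ‖J_T x‖ ≤ (8/ρ)‖x‖ for all x ∈ M, and assume ‖W‖ < ρ/8. Then H_χ̄ := T + χ̄Wχ̄ maps M into itself and restricts to a bijection of M onto itself with bounded inverse J (so that (T + W, T) is a Feshbach pair for χ), and the Feshbach operator F := T + χWχ − χW χ̄ (J(χ̄ W χ ·)) admits the expansion F = T + Σ_{L=1}^∞ (−1)^{L−1} χ W (Ř W)^{L−1} χ, where Ř is the bounded operator on 𝓗 defined by Ř x := J_T(χ̄²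 x); the series converges absolutely in operator norm. -/
/-!
Composing the inverse `JT` of `T` on `M` with `χb` gives a bounded operator `R` of norm at most
`8/ρ` with `T R = χb` and `χb R = R χb`. Hence `T + χb W χb = T (1 + R W χb)`, and since
`‖R W χb‖ < 1` the factor `1 + R W χb` is invertible by a Neumann series; so
`J = (1 + R W χb)⁻¹ JT` inverts `T + χb W χb` on `M`. The intertwining relation
`χb (1 + R W χb) = (1 + Ř W) χb`, with `Ř = R χb`, turns the Feshbach correction
`χ W χb J χb W χ` into `χ W (1 + Ř W)⁻¹ Ř W χ`, so `F - T = χ W (1 + Ř W)⁻¹ χ`, whose Neumann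
series is the claimed expansion.
-/

open Set

namespace Set.InvOn

theorem map_apply_comm {α : Type*} {f g S : α → α} {s : Set α} {x : α} (hinv : InvOn g f s s)
    (hg : MapsTo g s s) (hS : MapsTo S s s) (hSf : ∀ x, S (f x) = f (S x)) (hx : x ∈ s) :
    g (S x) = S (g x) :=
  calc g (S x) = g (f (S (g x))) := by rw [← hSf, hinv.2 hx]
    _ = S (g x) := hinv.1 (hS (hg hx))

section Submodule

variable {𝕜 E F : Type*} [Semiring 𝕜] [AddCommMonoid E] [Module 𝕜 E]
  [FunLike F E E] [LinearMapClass F 𝕜 E E] {T : F} {M : Submodule 𝕜 E} {g : E → E} {x y : E}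

theorem map_add_of_submodule (hinv : InvOn g T M M) (hg : MapsTo g M M) (hx : x ∈ M)
    (hy : y ∈ M) : g (x + y) = g x + g y :=
  calc g (x + y) = g (T (g x + g y)) := by rw [map_add, hinv.2 hx, hinv.2 hy]
    _ = g x + g y := hinv.1 (M.add_mem (hg hx) (hg hy))

theorem map_smul_of_submodule (hinv : InvOn g T M M) (hg : MapsTo g M M) (c : 𝕜)
    (hx : x ∈ M) : g (c • x) = c • g x :=
  calc g (c • x) = g (T (c • g x)) := by rw [map_smul, hinv.2 hx]
    _ = c • g x := hinv.1 (M.smul_mem c (hg hx))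

end Submodule

end Set.InvOn

theorem mapsTo_closure_range_of_comm {X : Type*} [TopologicalSpace X] {S B : X → X}
    (hS : Continuous S) (hSB : ∀ x, S (B x) = B (S x)) :
    MapsTo S (closure (range B)) (closure (range B)) :=
  MapsTo.closure (by rintro _ ⟨x, rfl⟩; exact ⟨S x, (hSB x).symm⟩) hS

theorem SemiconjBy.ring_inverse {M₀ : Type*} [MonoidWithZero M₀] {a b c : M₀}
    (h : SemiconjBy a b c) (hb : IsUnit b) (hc : IsUnit c) :
    SemiconjBy a (Ring.inverse b) (Ring.inverse c) := by
  obtain ⟨u, rfl⟩ := hb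
  obtain ⟨v, rfl⟩ := hc
  rw [Ring.inverse_unit, Ring.inverse_unit]
  exact h.units_inv_right

section Ring

variable {A : Type*} [Ring A]

theorem Ring.inverse_one_add_eq_one_sub {x : A} (hx : IsUnit (1 + x)) :
    Ring.inverse (1 + x) = 1 - Ring.inverse (1 + x) * x := by
  rw [eq_sub_iff_add_eq, ← mul_one_add]
  exact Ring.inverse_mul_cancel _ hx

theorem feshbach_correction_eq_inverse (χ χb W R : A) (hR : Commute χb R)
    (h₁ : IsUnit (1 + R * W * χb)) (h₂ : IsUnit (1 + R * χb * W)) :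
    χ * W * χ - χ * W * χb * Ring.inverse (1 + R * W * χb) * (R * W * χ) =
      χ * W * Ring.inverse (1 + R * χb * W) * χ := by
  have hsemi : SemiconjBy χb (1 + R * W * χb) (1 + R * χb * W) := by
    simp only [SemiconjBy, mul_add, add_mul, mul_one, one_mul, ← mul_assoc, hR.eq]
  have hinv := (hsemi.ring_inverse h₁ h₂).eq
  calc χ * W * χ - χ * W * χb * Ring.inverse (1 + R * W * χb) * (R * W * χ)
      = χ * W * (1 - Ring.inverse (1 + R * χb * W) * (R * χb * W)) * χ := by
        rw [mul_assoc (χ * W) χb, hinv]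
        simp only [mul_sub, sub_mul, mul_one, ← mul_assoc]
        rw [mul_assoc _ χb R, hR.eq, ← mul_assoc]
    _ = χ * W * Ring.inverse (1 + R * χb * W) * χ := by
        rw [← Ring.inverse_one_add_eq_one_sub h₂]

end Ring

section NormedRing

variable {A : Type*} [NormedRing A]

theorem summable_norm_mul_pow_mul (a b x : A) (hx : ‖x‖ < 1) :
    Summable fun n => ‖a * x ^ n * b‖ :=
  ((summable_norm_geometric_of_norm_lt_one hx).mul_left (‖a‖ * ‖b‖)).of_nonneg_of_le
    (fun _ => norm_nonneg _) fun n =>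
      calc ‖a * x ^ n * b‖ ≤ ‖a‖ * ‖x ^ n‖ * ‖b‖ := norm_mul₃_le
        _ = ‖a‖ * ‖b‖ * ‖x ^ n‖ := by ring

variable [HasSummableGeomSeries A]

theorem isUnit_one_add_of_norm_lt_one {x : A} (hx : ‖x‖ < 1) : IsUnit (1 + x) := by
  simpa using isUnit_one_sub_of_norm_lt_one (x := -x) (by rwa [norm_neg])

theorem hasSum_neg_one_pow_smul_mul_pow_mul {𝕜 : Type*} [NormedField 𝕜] [NormedAlgebra 𝕜 A]
    (a b x : A) (hx : ‖x‖ < 1) :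
    HasSum (fun n => (-1 : 𝕜) ^ n • (a * x ^ n * b)) (a * Ring.inverse (1 + x) * b) := by
  have h := ((hasSum_geom_series_inverse (-x) (by rwa [norm_neg])).mul_left a).mul_right b
  rw [sub_neg_eq_add] at h
  have hterm : (fun n => (-1 : 𝕜) ^ n • (a * x ^ n * b)) = fun n => a * (-x) ^ n * b :=
    funext fun n => by rw [← neg_one_smul 𝕜 x, smul_pow, mul_smul_comm, smul_mul_assoc]
  rw [hterm]
  exact h

end NormedRing

section Operators

variable {𝕜 E : Type*} [NontriviallyNormedField 𝕜] [NormedAddCommGroup E] [NormedSpace 𝕜 E]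
  {T : E →L[𝕜] E} {M : Submodule 𝕜 E} {g : E → E}

theorem exists_continuousLinearMap_eq_comp_of_invOn {F : Type*} [NormedAddCommGroup F]
    [NormedSpace 𝕜 F] (hinv : InvOn g T M M) (hg : MapsTo g M M) {C : ℝ} (hC0 : 0 ≤ C)
    (hC : ∀ x ∈ M, ‖g x‖ ≤ C * ‖x‖) (B : F →L[𝕜] E) (hB : ∀ x, B x ∈ M) :
    ∃ R : F →L[𝕜] E, (∀ x, R x = g (B x)) ∧ ‖R‖ ≤ C * ‖B‖ := by
  let R : F →ₗ[𝕜] E :=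
    { toFun := fun x => g (B x)
      map_add' := fun x y => by simp only [map_add, hinv.map_add_of_submodule hg (hB x) (hB y)]
      map_smul' := fun c x => by
        simp only [map_smul, hinv.map_smul_of_submodule hg c (hB x), RingHom.id_apply] }
  have hbound : ∀ x, ‖R x‖ ≤ C * ‖B‖ * ‖x‖ := fun x =>
    calc ‖g (B x)‖ ≤ C * ‖B x‖ := hC _ (hB x)
      _ ≤ C * ‖B‖ * ‖x‖ := by
        rw [mul_assoc]; exact mul_le_mul_of_nonneg_left (B.le_opNorm x) hC0
  exact ⟨R.mkContinuous _ hbound, fun _ => rfl,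
    LinearMap.mkContinuous_norm_le _ (by positivity) hbound⟩

theorem exists_inv_comp_of_closure_range {B : E →L[𝕜] E} (hBT : B * T = T * B)
    (hM : (M : Set E) = closure (range B)) (hinv : InvOn g T M M) (hg : MapsTo g M M) {C : ℝ}
    (hC0 : 0 ≤ C) (hC : ∀ x ∈ M, ‖g x‖ ≤ C * ‖x‖) :
    ∃ R : E →L[𝕜] E, (∀ x, R x = g (B x)) ∧ (∀ x, R x ∈ M) ∧ T * R = B ∧ Commute B R ∧
      ‖R‖ ≤ C * ‖B‖ := by
  have hBM : ∀ x, B x ∈ M := fun x => by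
    rw [← SetLike.mem_coe, hM]
    exact subset_closure (mem_range_self x)
  obtain ⟨R, hR, hRnorm⟩ := exists_continuousLinearMap_eq_comp_of_invOn hinv hg hC0 hC B hBM
  refine ⟨R, hR, fun x => hR x ▸ hg (hBM x), ContinuousLinearMap.ext fun x => ?_,
    ContinuousLinearMap.ext fun x => ?_, hRnorm⟩
  · simp only [mul_apply_eq_comp, hR, hinv.2 (hBM x)]
  · simp only [mul_apply_eq_comp, hR]
    exact (hinv.map_apply_comm hg (fun y _ => hBM y) (fun y => congr($hBT y)) (hBM x)).symm

theorem Set.InvOn.inverse_one_add_comp {Q : E →L[𝕜] E} (hinv : InvOn g T M M)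
    (hg : MapsTo g M M) (hQ : ∀ x, Q x ∈ M) (hu : IsUnit (1 + Q)) :
    InvOn (⇑(Ring.inverse (1 + Q)) ∘ g) (T * (1 + Q)) M M ∧
      MapsTo (⇑(Ring.inverse (1 + Q)) ∘ g) M M := by
  set N := Ring.inverse (1 + Q)
  have hNleft : ∀ x, N (x + Q x) = x := fun x => by
    simpa using congr($(Ring.inverse_mul_cancel _ hu) x)
  have hNright : ∀ x, N x + Q (N x) = x := fun x => by
    simpa using congr($(Ring.mul_inverse_cancel _ hu) x)
  have hNM : MapsTo N M M := fun x hx => by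
    rw [eq_sub_of_add_eq (hNright x)]
    exact M.sub_mem hx (hQ _)
  refine ⟨⟨fun x hx => ?_, fun x hx => ?_⟩, hNM.comp hg⟩
  · simp only [Function.comp_apply, mul_apply_eq_comp, add_apply, one_apply_eq_self]
    rw [hinv.1 (M.add_mem hx (hQ x)), hNleft]
  · simp only [Function.comp_apply, mul_apply_eq_comp, add_apply, one_apply_eq_self]
    rw [hNright, hinv.2 hx]

end Operators

theorem feshbach_pair_criterion_second_iteration_general
    {𝓗 : Type*} [NormedAddCommGroup 𝓗] [InnerProductSpace ℂ 𝓗] [CompleteSpace 𝓗]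
    (χ χb T W : 𝓗 →L[ℂ] 𝓗)
    (hχbT : χb * T = T * χb)
    (hnχb : ‖χb‖ ≤ 1)
    (ρ : ℝ) (hρ0 : 0 < ρ)
    (M : Set 𝓗) (hM : M = closure (Set.range χb))
    (JT : 𝓗 → 𝓗)
    (hJTmem : ∀ x ∈ M, JT x ∈ M)
    (hJTleft : ∀ x ∈ M, T (JT x) = x)
    (hJTright : ∀ x ∈ M, JT (T x) = x)
    (hJTbound : ∀ x ∈ M, ‖JT x‖ ≤ (8 / ρ) * ‖x‖)
    (hW : ‖W‖ < ρ / 8) :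
    Set.MapsTo (T + χb * W * χb) M M ∧
    Set.BijOn (T + χb * W * χb) M M ∧
    ∃ J : 𝓗 → 𝓗,
      (∀ x ∈ M, J x ∈ M) ∧
      (∀ x ∈ M, (T + χb * W * χb) (J x) = x) ∧
      (∀ x ∈ M, J ((T + χb * W * χb) x) = x) ∧
      (∃ C : ℝ, 0 ≤ C ∧ ∀ x ∈ M, ‖J x‖ ≤ C * ‖x‖) ∧
      ∃ Rop : 𝓗 →L[ℂ] 𝓗, (∀ x, Rop x = JT (χb (χb x))) ∧
        Summable (fun n : ℕ => ‖χ * W * (Rop * W) ^ n * χ‖) ∧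
        ∃ F : 𝓗 →L[ℂ] 𝓗,
          (∀ v, F v = T v + χ (W (χ v)) - χ (W (χb (J (χb (W (χ v))))))) ∧
          HasSum (fun n : ℕ => ((-1 : ℂ) ^ n) • (χ * W * (Rop * W) ^ n * χ)) (F - T) := by
  obtain ⟨M, rfl⟩ : ∃ N : Submodule ℂ 𝓗, (N : Set 𝓗) = M :=
    ⟨(LinearMap.range (χb : 𝓗 →ₗ[ℂ] 𝓗)).topologicalClosure, by
      rw [hM, Submodule.topologicalClosure_coe, LinearMap.coe_range]; rfl⟩
  have hinv : InvOn JT T M M := ⟨hJTright, hJTleft⟩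
  have hTM : MapsTo T M M :=
    hM ▸ mapsTo_closure_range_of_comm T.continuous fun x => congr($hχbT x).symm
  obtain ⟨R, hR, hRM, hTR, hχbR, hRnorm⟩ :=
    exists_inv_comp_of_closure_range hχbT hM hinv hJTmem (by positivity) hJTbound
  have hsmall : ‖R‖ * ‖W‖ < 1 :=
    calc ‖R‖ * ‖W‖ ≤ 8 / ρ * ‖W‖ := by
          gcongr; exact hRnorm.trans (mul_le_of_le_one_right (by positivity) hnχb)
      _ < 8 / ρ * (ρ / 8) := by gcongr
      _ = 1 := by field_simp
  have hQ : ‖R * W * χb‖ < 1 :=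
    (norm_mul₃_le.trans (mul_le_of_le_one_right (by positivity) hnχb)).trans_lt hsmall
  have hRop : ‖R * χb * W‖ < 1 := (norm_mul₃_le.trans (by
    rw [mul_right_comm]; exact mul_le_of_le_one_right (by positivity) hnχb)).trans_lt hsmall
  have hH : T + χb * W * χb = T * (1 + R * W * χb) := by
    rw [mul_add, mul_one, ← mul_assoc, ← mul_assoc, hTR]
  obtain ⟨hJinv, hJM⟩ := hinv.inverse_one_add_comp (Q := R * W * χb) hJTmem (fun _ => hRM _)
    (isUnit_one_add_of_norm_lt_one hQ)
  set N := Ring.inverse (1 + R * W * χb)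
  have hHM : MapsTo (⇑(T * (1 + R * W * χb))) M M := fun x hx => hTM (M.add_mem hx (hRM _))
  rw [hH]
  refine ⟨hHM, hJinv.bijOn hHM hJM, N ∘ JT, hJM, hJinv.2, hJinv.1,
    ⟨‖N‖ * (8 / ρ), by positivity, fun x hx => ?_⟩, R * χb, fun x => hR _,
    summable_norm_mul_pow_mul _ _ _ hRop, T + (χ * W * χ - χ * W * χb * N * (R * W * χ)),
    fun v => by simp [hR, add_sub_assoc], ?_⟩
  · calc ‖N (JT x)‖ ≤ ‖N‖ * (8 / ρ * ‖x‖) := N.le_of_opNorm_le_of_le le_rfl (hJTbound x hx)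
      _ = ‖N‖ * (8 / ρ) * ‖x‖ := by ring
  · rw [add_sub_cancel_left, feshbach_correction_eq_inverse χ χb W R hχbR
      (isUnit_one_add_of_norm_lt_one hQ) (isUnit_one_add_of_norm_lt_one hRop)]
    exact hasSum_neg_one_pow_smul_mul_pow_mul _ _ _ hRop

/-- **Abstract Feshbach pair criterion with Neumann expansion.**
Let `χ, χb, T, W` be bounded operators on a complex Hilbert space, with `χ, χb` commuting
with each other and with `T`, `χ² + χb² = 1`, `‖χ‖ ≤ 1`, `‖χb‖ ≤ 1`. Let `0 < ρ ≤ 1` and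
let `M` be the closure of `Ran χb`. Assume `T` restricts to a bijection of `M` onto itself
with inverse `JT` satisfying `‖JT x‖ ≤ (8/ρ)‖x‖` on `M`, and `‖W‖ < ρ/8`. Then
`Hχb := T + χb W χb` maps `M` into itself and restricts to a bijection of `M` with a
bounded inverse `J`, and the Feshbach operator
`F v = T v + χWχ v − χW χb (J (χb W χ v))` admits the absolutely (operator-norm)
convergent expansion `F = T + Σ_{n=0}^∞ (−1)^n χ W (Rop W)^n χ`, where `Rop x = JT (χb² x)`. -/
theorem feshbach_pair_criterion_second_iteration
    {𝓗 : Type*} [NormedAddCommGroup 𝓗] [InnerProductSpace ℂ 𝓗] [CompleteSpace 𝓗]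
    (χ χb T W : 𝓗 →L[ℂ] 𝓗)
    (hcomm : χ * χb = χb * χ)
    (hχT : χ * T = T * χ) (hχbT : χb * T = T * χb)
    (hsum : χ ^ 2 + χb ^ 2 = 1)
    (hnχ : ‖χ‖ ≤ 1) (hnχb : ‖χb‖ ≤ 1)
    (ρ : ℝ) (hρ0 : 0 < ρ) (hρ1 : ρ ≤ 1)
    (M : Set 𝓗) (hM : M = closure (Set.range χb))
    (hTbij : Set.BijOn T M M)
    (JT : 𝓗 → 𝓗)
    (hJTmem : ∀ x ∈ M, JT x ∈ M)
    (hJTleft : ∀ x ∈ M, T (JT x) = x)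
    (hJTright : ∀ x ∈ M, JT (T x) = x)
    (hJTbound : ∀ x ∈ M, ‖JT x‖ ≤ (8 / ρ) * ‖x‖)
    (hW : ‖W‖ < ρ / 8) :
    Set.MapsTo (T + χb * W * χb) M M ∧
    Set.BijOn (T + χb * W * χb) M M ∧
    ∃ J : 𝓗 → 𝓗,
      (∀ x ∈ M, J x ∈ M) ∧
      (∀ x ∈ M, (T + χb * W * χb) (J x) = x) ∧
      (∀ x ∈ M, J ((T + χb * W * χb) x) = x) ∧
      (∃ C : ℝ, 0 ≤ C ∧ ∀ x ∈ M, ‖J x‖ ≤ C * ‖x‖) ∧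
      ∃ Rop : 𝓗 →L[ℂ] 𝓗, (∀ x, Rop x = JT (χb (χb x))) ∧
        Summable (fun n : ℕ => ‖χ * W * (Rop * W) ^ n * χ‖) ∧
        ∃ F : 𝓗 →L[ℂ] 𝓗,
          (∀ v, F v = T v + χ (W (χ v)) - χ (W (χb (J (χb (W (χ v))))))) ∧
          HasSum (fun n : ℕ => ((-1 : ℂ) ^ n) • (χ * W * (Rop * W) ^ n * χ)) (F - T) :=
  feshbach_pair_criterion_second_iteration_general χ χb T W hχbT hnχb ρ hρ0 M hM JT hJTmem hJTleft
    hJTright hJTbound hW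
end

section
/- Let E be a finite-dimensional complex inner product space of dimension d₀ ≥ 1 and let Z be a selfadjoint endomorphism of E whose smallest eigenvalue ε⁽²⁾ is a simple eigenvalue and whose every other eigenvalue λ satisfies λ − ε⁽²⁾ ≥ 1. Let P be the orthogonal projection onto the ε⁽²⁾-eigenspace of Z. Let χ : ℝ → ℝ satisfy 0 ≤ χ ≤ 1 and χ(r) = 1 for all r ≤ 3/4. Let 0 < δ₀ < π/2, set c_{δ₀} := 1 if δ₀ ≤ π/4 and c_{δ₀} := sin(π − 2δ₀) if δ₀ > π/4, and let S_{δ₀} be the set of nonzero complex numbers z with |arg z| < δ₀ or |arg(−z)| < δ₀. Let ρ₀, ρ₁ ∈ (0, 1/2], ε_at ∈ ℝ, and let g ∈ S_{δ₀} satisfy ρ₀^{−1}|g|² < (1/4)/(‖Z‖ + c_{δ₀}) and ρ₁ρ₀ ≤ |g|² c_{δ₀}. Let z ∈ ℂ satisfy |z − (ε_at + g² ε⁽²⁾)| < ρ₀ρ₁/2, and for r ∈ ℝ define the endomorphism X(r) := ρ₀^{−1}((ε_at − z + ρ₀ r)·Id + χ(r)² g² Z) of E. Then: (a) for every r ∈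 [0,1] and every η in the orthogonal complement of Ran P, one has ‖X(r)η‖ ≥ (ρ₁/4)‖η‖; and (b) for every r ∈ [3ρ₁/4, 1] and every η ∈ Ran P, one has ‖X(r)η‖ ≥ (ρ₁/4)‖η‖. -/
/-!
In an orthonormal eigenbasis of `Z` the operator `X(r)` is diagonal, with entries
`ρ₀⁻¹ (ε_at − z + ρ₀ r + χ(r)² g² λ)` for the eigenvalues `λ` of `Z`, so it suffices to bound
these numbers below by `ρ₁/4`. Write `ε_at − z + g²ε⁽²⁾ = w`, with `|w| < ρ₀ρ₁/2`.
For `r ≤ 3/4` we have `χ(r) = 1`. If `λ ≥ ε⁽²⁾ + 1`, the number `ρ₀r + g²(λ − ε⁽²⁾)` is a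
nonnegative real plus a point of the ray `g²·[0, ∞)`, whose angle to `[0, ∞)` is less than
`2δ₀ < π`; its modulus is therefore at least `c_{δ₀}|g|²(λ − ε⁽²⁾) ≥ ρ₀ρ₁`. For `λ = ε⁽²⁾` what
is left is `ρ₀r ≥ 3ρ₀ρ₁/4`. For `r > 3/4` the term `ρ₀r > 3ρ₀/4` dominates
`|g|²|χ(r)²λ − ε⁽²⁾| ≤ 2|g|²‖Z‖ < ρ₀/2`.
-/

open Real ContinuousLinearMap

noncomputable def coneConstant (δ : ℝ) : ℝ := if δ ≤ π / 4 then 1 else sin (π - 2 * δ)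

lemma coneConstant_pos {δ : ℝ} (hδ0 : 0 < δ) (hδ1 : δ < π / 2) : 0 < coneConstant δ := by
  unfold coneConstant
  split_ifs
  · exact one_pos
  · exact sin_pos_of_pos_of_lt_pi (by linarith) (by linarith)

lemma coneConstant_le_one (δ : ℝ) : coneConstant δ ≤ 1 := by
  unfold coneConstant
  split_ifs
  exacts [le_rfl, sin_le_one _]

lemma Complex.re_sq_eq_norm_sq_mul_cos (g : ℂ) : (g ^ 2).re = ‖g‖ ^ 2 * Real.cos (2 * g.arg) := by
  rw [pow_two, Complex.mul_re, ← Complex.norm_mul_cos_arg g, ← Complex.norm_mul_sin_arg g,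
    Real.cos_two_mul']
  ring

lemma Complex.im_sq_eq_norm_sq_mul_sin (g : ℂ) : (g ^ 2).im = ‖g‖ ^ 2 * Real.sin (2 * g.arg) := by
  rw [pow_two, Complex.mul_im, ← Complex.norm_mul_cos_arg g, ← Complex.norm_mul_sin_arg g,
    Real.sin_two_mul]
  ring

lemma Real.sin_pi_sub_le_abs_sin {x a : ℝ} (hx : π / 2 ≤ |x|) (hxa : |x| ≤ a) (ha : a ≤ π) :
    sin (π - a) ≤ |sin x| := by
  rw [abs_sin_eq_sin_abs_of_abs_le_pi (hxa.trans ha), ← sin_pi_sub |x|]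
  exact sin_le_sin_of_le_of_le_pi_div_two (by linarith) (by linarith) (by linarith)

lemma Complex.norm_le_norm_ofReal_add_of_re_nonneg {t : ℝ} {w : ℂ} (ht : 0 ≤ t) (hw : 0 ≤ w.re) :
    ‖w‖ ≤ ‖(t : ℂ) + w‖ := by
  rw [← sq_le_sq₀ (norm_nonneg _) (norm_nonneg _), Complex.sq_norm, Complex.sq_norm,
    Complex.normSq_apply, Complex.normSq_apply]
  simp only [Complex.add_re, Complex.add_im, Complex.ofReal_re, Complex.ofReal_im, zero_add]
  nlinarith

lemma coneConstant_mul_le_norm_ofReal_add_of_abs_arg_lt {δ t μ : ℝ} {g : ℂ} (hδ : δ < π / 2)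
    (hg : |g.arg| < δ) (ht : 0 ≤ t) (hμ : 0 ≤ μ) :
    coneConstant δ * (‖g‖ ^ 2 * μ) ≤ ‖(t : ℂ) + g ^ 2 * μ‖ := by
  have hwre : (g ^ 2 * μ).re = ‖g‖ ^ 2 * μ * cos (2 * g.arg) := by
    rw [Complex.re_mul_ofReal, Complex.re_sq_eq_norm_sq_mul_cos]; ring
  have hwim : (g ^ 2 * μ).im = ‖g‖ ^ 2 * μ * sin (2 * g.arg) := by
    rw [Complex.im_mul_ofReal, Complex.im_sq_eq_norm_sq_mul_sin]; ring
  have hgμ : 0 ≤ ‖g‖ ^ 2 * μ := by positivity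
  have h2θ : |2 * g.arg| < 2 * δ := by rw [abs_mul, abs_two]; linarith
  by_cases hcos : 0 ≤ cos (2 * g.arg)
  · have hw := Complex.norm_le_norm_ofReal_add_of_re_nonneg ht
      (hwre ▸ mul_nonneg hgμ hcos)
    rw [norm_mul, norm_pow, Complex.norm_real, norm_of_nonneg hμ] at hw
    nlinarith [coneConstant_le_one δ]
  · have hwide : π / 2 < |2 * g.arg| := by
      by_contra! h
      exact hcos (cos_nonneg_of_neg_pi_div_two_le_of_le (abs_le.mp h).1 (abs_le.mp h).2)
    have hδ4 : ¬ δ ≤ π / 4 := fun h => by linarith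
    calc coneConstant δ * (‖g‖ ^ 2 * μ)
        = sin (π - 2 * δ) * (‖g‖ ^ 2 * μ) := by rw [coneConstant, if_neg hδ4]
      _ ≤ |sin (2 * g.arg)| * (‖g‖ ^ 2 * μ) := by
          gcongr
          exact Real.sin_pi_sub_le_abs_sin hwide.le h2θ.le (by linarith)
      _ = |((t : ℂ) + g ^ 2 * μ).im| := by
          rw [Complex.add_im, Complex.ofReal_im, zero_add, hwim, abs_mul, abs_of_nonneg hgμ]
          ring
      _ ≤ ‖(t : ℂ) + g ^ 2 * μ‖ := Complex.abs_im_le_norm _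

lemma coneConstant_mul_le_norm_ofReal_add {δ t μ : ℝ} {g : ℂ} (hδ : δ < π / 2)
    (hg : |g.arg| < δ ∨ |(-g).arg| < δ) (ht : 0 ≤ t) (hμ : 0 ≤ μ) :
    coneConstant δ * (‖g‖ ^ 2 * μ) ≤ ‖(t : ℂ) + g ^ 2 * μ‖ := by
  rcases hg with hg | hg
  · exact coneConstant_mul_le_norm_ofReal_add_of_abs_arg_lt hδ hg ht hμ
  · simpa only [norm_neg, neg_sq] using
      coneConstant_mul_le_norm_ofReal_add_of_abs_arg_lt hδ hg ht hμ

section Symbol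

variable {δ ρ₀ ρ₁ ε2 : ℝ} {g s : ℂ}

lemma half_mul_le_norm_of_one_le_sub (hδ : δ < π / 2) (hg : |g.arg| < δ ∨ |(-g).arg| < δ)
    (hgc : ρ₁ * ρ₀ ≤ ‖g‖ ^ 2 * coneConstant δ) (hs : ‖s + g ^ 2 * ε2‖ < ρ₀ * ρ₁ / 2)
    {t l : ℝ} (ht : 0 ≤ t) (hl : 1 ≤ l - ε2) :
    ρ₀ * ρ₁ / 2 ≤ ‖s + t + g ^ 2 * l‖ := by
  have hcone := coneConstant_mul_le_norm_ofReal_add hδ hg ht (by linarith : 0 ≤ l - ε2)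
  have hsplit : s + t + g ^ 2 * l = ((t : ℂ) + g ^ 2 * ((l - ε2 : ℝ) : ℂ)) + (s + g ^ 2 * ε2) := by
    push_cast; ring
  have hρ : 0 < ρ₀ * ρ₁ := by linarith [norm_nonneg (s + g ^ 2 * ε2)]
  rw [hsplit]
  nlinarith [norm_sub_le_norm_add ((t : ℂ) + g ^ 2 * ((l - ε2 : ℝ) : ℂ)) (s + g ^ 2 * ε2)]

lemma quarter_mul_le_norm_of_three_quarters_mul_le (hs : ‖s + g ^ 2 * ε2‖ < ρ₀ * ρ₁ / 2) {t : ℝ}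
    (ht : 3 * ρ₀ * ρ₁ / 4 ≤ t) : ρ₀ * ρ₁ / 4 ≤ ‖s + t + g ^ 2 * ε2‖ := by
  have h := norm_sub_le_norm_add (t : ℂ) (s + g ^ 2 * ε2)
  rw [Complex.norm_real, norm_of_nonneg (by linarith [norm_nonneg (s + g ^ 2 * ε2)]),
    ← add_assoc, add_comm (t : ℂ) s] at h
  linarith

lemma sub_half_mul_le_norm_of_three_quarters_le {K x l t : ℝ} (hs : ‖s + g ^ 2 * ε2‖ < ρ₀ * ρ₁ / 2)
    (hgK : ‖g‖ ^ 2 * K < ρ₀ / 4) (hε2 : |ε2| ≤ K) (hl : |l| ≤ K) (hx0 : 0 ≤ x) (hx1 : x ≤ 1)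
    (ht : 3 * ρ₀ / 4 ≤ t) :
    ρ₀ / 4 - ρ₀ * ρ₁ / 2 ≤ ‖s + t + (x : ℂ) ^ 2 * g ^ 2 * l‖ := by
  have hsplit : s + t + (x : ℂ) ^ 2 * g ^ 2 * l
      = t + ((s + g ^ 2 * ε2) + g ^ 2 * ((x ^ 2 * l - ε2 : ℝ) : ℂ)) := by
    push_cast; ring
  have hxl : |x ^ 2 * l - ε2| ≤ 2 * K := by
    have : |x ^ 2 * l| ≤ |l| := by
      rw [abs_mul, abs_of_nonneg (sq_nonneg x)]
      exact mul_le_of_le_one_left (abs_nonneg l) (pow_le_one₀ hx0 hx1)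
    linarith [abs_sub (x ^ 2 * l) ε2]
  have hpert : ‖g ^ 2 * ((x ^ 2 * l - ε2 : ℝ) : ℂ)‖ ≤ ‖g‖ ^ 2 * (2 * K) := by
    rw [norm_mul, norm_pow, Complex.norm_real, norm_eq_abs]
    gcongr
  have htri := norm_sub_le_norm_add (t : ℂ) ((s + g ^ 2 * ε2) + g ^ 2 * ((x ^ 2 * l - ε2 : ℝ) : ℂ))
  have hsum := norm_add_le (s + g ^ 2 * ε2) (g ^ 2 * ((x ^ 2 * l - ε2 : ℝ) : ℂ))
  have hρ₀ : 0 < ρ₀ := by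
    nlinarith [mul_nonneg (sq_nonneg ‖g‖) ((abs_nonneg ε2).trans hε2)]
  rw [Complex.norm_real, norm_of_nonneg (by linarith)] at htri
  rw [hsplit]
  linarith

lemma quarter_mul_le_norm_symbol {εat K : ℝ} {z : ℂ} {χ : ℝ → ℝ} (hχ0 : ∀ r, 0 ≤ χ r)
    (hχ1 : ∀ r, χ r ≤ 1) (hχone : ∀ r : ℝ, r ≤ 3 / 4 → χ r = 1) (hδ0 : 0 < δ) (hδ : δ < π / 2)
    (hg : |g.arg| < δ ∨ |(-g).arg| < δ) (hρ₀ : 0 < ρ₀)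
    (hg1 : ρ₀⁻¹ * ‖g‖ ^ 2 < (1 / 4) / (K + coneConstant δ))
    (hgc : ρ₁ * ρ₀ ≤ ‖g‖ ^ 2 * coneConstant δ)
    (hz : ‖z - ((εat : ℂ) + g ^ 2 * (ε2 : ℂ))‖ < ρ₀ * ρ₁ / 2) (hε2 : |ε2| ≤ K)
    {r l : ℝ} (hr : 0 ≤ r) (hl : |l| ≤ K) (hcase : 1 ≤ l - ε2 ∨ 3 * ρ₁ / 4 ≤ r ∧ l = ε2) :
    ρ₀ * ρ₁ / 4 ≤ ‖(εat : ℂ) - z + ((ρ₀ * r : ℝ) : ℂ) + ((χ r : ℝ) : ℂ) ^ 2 * g ^ 2 * l‖ := by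
  have hs : ‖(εat : ℂ) - z + g ^ 2 * ε2‖ < ρ₀ * ρ₁ / 2 := by
    rwa [← norm_neg, show -((εat : ℂ) - z + g ^ 2 * ε2) = z - (εat + g ^ 2 * ε2) by ring]
  have hρ : 0 < ρ₀ * ρ₁ := by linarith [norm_nonneg ((εat : ℂ) - z + g ^ 2 * ε2)]
  have hK : 0 ≤ K := (abs_nonneg ε2).trans hε2
  rw [lt_div_iff₀ (by linarith [coneConstant_pos hδ0 hδ]), inv_mul_eq_div, div_mul_eq_mul_div,
    div_lt_iff₀ hρ₀] at hg1
  have hgK : ‖g‖ ^ 2 * K < ρ₀ / 4 := by linarith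
  have hρ₁ : ρ₁ < 1 / 4 := by nlinarith [mul_nonneg (sq_nonneg ‖g‖) hK]
  rcases le_or_gt r (3 / 4) with hlow | hhigh
  · rw [hχone r hlow, Complex.ofReal_one, one_pow, one_mul]
    rcases hcase with hgap | ⟨hr₁, rfl⟩
    · linarith [half_mul_le_norm_of_one_le_sub hδ hg hgc hs (mul_nonneg hρ₀.le hr) hgap]
    · exact quarter_mul_le_norm_of_three_quarters_mul_le hs (by nlinarith)
  · have := sub_half_mul_le_norm_of_three_quarters_le (t := ρ₀ * r) hs hgK hε2 hl (hχ0 r)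
      (hχ1 r) (by nlinarith)
    nlinarith

end Symbol

section Spectral

variable {𝕜 E : Type*} [RCLike 𝕜] [NormedAddCommGroup E] [InnerProductSpace 𝕜 E]

lemma Module.End.HasEigenvalue.norm_le_opNorm {T : E →L[𝕜] E} {μ : 𝕜}
    (hμ : Module.End.HasEigenvalue (T : E →ₗ[𝕜] E) μ) : ‖μ‖ ≤ ‖T‖ := by
  obtain ⟨v, hv⟩ := hμ.exists_hasEigenvector
  have hTv : T v = μ • v := Module.End.mem_eigenspace_iff.mp hv.1
  refine le_of_mul_le_mul_right ?_ (norm_pos_iff.mpr hv.2)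
  simpa only [hTv, norm_smul] using T.le_opNorm v

lemma OrthonormalBasis.mul_norm_le_norm_of_forall {ι : Type*} [Fintype ι]
    (b : OrthonormalBasis ι 𝕜 E) {x y : E} {m : ℝ} (hm : 0 ≤ m)
    (h : ∀ i, m * ‖b.repr x i‖ ≤ ‖b.repr y i‖) : m * ‖x‖ ≤ ‖y‖ := by
  have hnorm : ∀ v : E, ‖v‖ ^ 2 = ∑ i, ‖b.repr v i‖ ^ 2 := fun v => by
    rw [← b.repr.norm_map v, EuclideanSpace.norm_sq_eq]
  rw [← sq_le_sq₀ (by positivity) (norm_nonneg _), mul_pow, hnorm, hnorm, Finset.mul_sum]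
  gcongr with i
  rw [← mul_pow]
  exact pow_le_pow_left₀ (by positivity) (h i) 2

variable [FiniteDimensional 𝕜 E]

lemma LinearMap.IsSymmetric.mul_norm_le_norm_of_mem_orthogonal_eigenspace
    {T : E →ₗ[𝕜] E} (hT : T.IsSymmetric) (a b : 𝕜) {μ : 𝕜} {m : ℝ} (hm : 0 ≤ m)
    (h : ∀ l : ℝ, Module.End.HasEigenvalue T l → (l : 𝕜) ≠ μ → m ≤ ‖a + b * l‖)
    {η : E} (hη : η ∈ (Module.End.eigenspace T μ)ᗮ) :
    m * ‖η‖ ≤ ‖a • η + b • T η‖ := by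
  set e := hT.eigenvectorBasis rfl
  refine e.mul_norm_le_norm_of_forall hm fun i => ?_
  have hcoord : e.repr (a • η + b • T η) i = (a + b * hT.eigenvalues rfl i) * e.repr η i := by
    simp only [map_add, map_smul, PiLp.add_apply, PiLp.smul_apply, smul_eq_mul, e,
      hT.eigenvectorBasis_apply_self_apply]
    ring
  rw [hcoord, norm_mul]
  by_cases hi : (hT.eigenvalues rfl i : 𝕜) = μ
  · have hei : e i ∈ Module.End.eigenspace T μ := hi ▸ (hT.hasEigenvector_eigenvectorBasis rfl i).1
    rw [e.repr_apply_apply, Submodule.inner_right_of_mem_orthogonal hei hη]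
    simp
  · exact mul_le_mul_of_nonneg_right (h _ (hT.hasEigenvalue_eigenvalues rfl i) hi) (norm_nonneg _)

end Spectral

theorem free_approximation_fiber_bounds_general
    {E : Type*} [NormedAddCommGroup E] [InnerProductSpace ℂ E] [FiniteDimensional ℂ E]
    (Z : E →L[ℂ] E) (hZsa : IsSelfAdjoint Z)
    (ε2 : ℝ)
    (hev : Module.End.HasEigenvalue (Z : E →ₗ[ℂ] E) (ε2 : ℂ))
    (hgap : ∀ c : ℂ, Module.End.HasEigenvalue (Z : E →ₗ[ℂ] E) c → c ≠ (ε2 : ℂ) →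
      1 ≤ c.re - ε2)
    (P : E →L[ℂ] E)
    (hP : P = (Module.End.eigenspace (Z : E →ₗ[ℂ] E) (ε2 : ℂ)).subtypeL ∘L
      Submodule.orthogonalProjectionOnto (Module.End.eigenspace (Z : E →ₗ[ℂ] E) (ε2 : ℂ)))
    (χ : ℝ → ℝ) (hχ0 : ∀ r, 0 ≤ χ r) (hχ1 : ∀ r, χ r ≤ 1)
    (hχone : ∀ r : ℝ, r ≤ 3 / 4 → χ r = 1)
    (δ₀ : ℝ) (hδ1 : 0 < δ₀) (hδ2 : δ₀ < π / 2)
    (c : ℝ) (hc : c = if δ₀ ≤ π / 4 then 1 else Real.sin (π - 2 * δ₀))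
    (ρ₀ ρ₁ : ℝ) (hρ₀ : ρ₀ ∈ Set.Ioc (0 : ℝ) (1 / 2))
    (εat : ℝ)
    (g : ℂ) (hgS : |g.arg| < δ₀ ∨ |(-g).arg| < δ₀)
    (hg1 : ρ₀⁻¹ * ‖g‖ ^ 2 < (1 / 4) / (‖Z‖ + c))
    (hg2 : ρ₁ * ρ₀ ≤ ‖g‖ ^ 2 * c)
    (z : ℂ) (hz : ‖z - ((εat : ℂ) + g ^ 2 * (ε2 : ℂ))‖ < ρ₀ * ρ₁ / 2)
    (X : ℝ → (E →L[ℂ] E))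
    (hX : ∀ r : ℝ, X r = ((ρ₀ : ℂ))⁻¹ •
      (((εat : ℂ) - z + ((ρ₀ * r : ℝ) : ℂ)) • (1 : E →L[ℂ] E) +
        (((χ r : ℝ) : ℂ) ^ 2 * g ^ 2) • Z)) :
    (∀ r ∈ Set.Icc (0 : ℝ) 1, ∀ η ∈ (LinearMap.range (P : E →ₗ[ℂ] E))ᗮ,
      ρ₁ / 4 * ‖η‖ ≤ ‖X r η‖) ∧
    (∀ r ∈ Set.Icc (3 * ρ₁ / 4) 1, ∀ η ∈ LinearMap.range (P : E →ₗ[ℂ] E),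
      ρ₁ / 4 * ‖η‖ ≤ ‖X r η‖) := by
  change c = coneConstant δ₀ at hc
  subst hc
  have hρ₀pos : 0 < ρ₀ := hρ₀.1
  have hρ₁ : 0 < ρ₁ := by nlinarith [norm_nonneg (z - ((εat : ℂ) + g ^ 2 * (ε2 : ℂ)))]
  have hrange : LinearMap.range (P : E →ₗ[ℂ] E) = Module.End.eigenspace (Z : E →ₗ[ℂ] E) ε2 :=
    hP ▸ Submodule.range_starProjection _
  have hε2 : |ε2| ≤ ‖Z‖ := by simpa using hev.norm_le_opNorm
  have key {r l : ℝ} := quarter_mul_le_norm_symbol hχ0 hχ1 hχone hδ1 hδ2 hgS hρ₀pos hg1 hg2 hz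
    hε2 (r := r) (l := l)
  have hscale : ∀ r (η : E), ρ₀ * ρ₁ / 4 * ‖η‖ ≤
      ‖((εat : ℂ) - z + ((ρ₀ * r : ℝ) : ℂ)) • η + (((χ r : ℝ) : ℂ) ^ 2 * g ^ 2) • Z η‖ →
      ρ₁ / 4 * ‖η‖ ≤ ‖X r η‖ := by
    intro r η h
    rw [hX r, smul_apply, norm_smul, norm_inv, Complex.norm_real, norm_of_nonneg hρ₀pos.le,
      le_inv_mul_iff₀ hρ₀pos]
    simp only [add_apply, smul_apply, one_apply_eq_self]
    linarith
  constructor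
  · intro r hr η hη
    rw [hrange] at hη
    refine hscale r η (hZsa.isSymmetric.mul_norm_le_norm_of_mem_orthogonal_eigenspace _ _
      (by positivity) (fun l hl hne => key hr.1 ?_ (Or.inl ?_)) hη)
    · simpa using hl.norm_le_opNorm
    · simpa using hgap l hl hne
  · intro r hr η hη
    rw [hrange] at hη
    have hZη : Z η = (ε2 : ℂ) • η := Module.End.mem_eigenspace_iff.mp hη
    refine hscale r η ?_
    rw [hZη, smul_smul, ← add_smul, norm_smul]
    exact mul_le_mul_of_nonneg_right (key (by linarith [hr.1]) hε2 (Or.inr ⟨hr.1, rfl⟩))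
      (norm_nonneg η)

/-- **Fiberwise invertibility bounds for the free approximation to the first Feshbach
operator.** Let `Z` be a selfadjoint endomorphism of a finite-dimensional complex inner
product space with simple smallest eigenvalue `ε2` and all other eigenvalues at least
`ε2 + 1`, `P` the orthogonal projection onto the `ε2`-eigenspace, `χ` a cutoff with
`0 ≤ χ ≤ 1` and `χ = 1` on `(−∞, 3/4]`. For `g` in the cone `S_{δ₀}` with
`ρ₀⁻¹|g|² < (1/4)/(‖Z‖ + c_{δ₀})`, `ρ₁ρ₀ ≤ |g|² c_{δ₀}`, and
`|z − (ε_at + g²ε2)| < ρ₀ρ₁/2`, the operator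
`X(r) = ρ₀⁻¹((ε_at − z + ρ₀r)·Id + χ(r)²g²Z)` satisfies `‖X(r)η‖ ≥ (ρ₁/4)‖η‖`
for `r ∈ [0,1]`, `η ⟂ Ran P`, and for `r ∈ [3ρ₁/4, 1]`, `η ∈ Ran P`. -/
theorem free_approximation_fiber_bounds
    {E : Type*} [NormedAddCommGroup E] [InnerProductSpace ℂ E] [FiniteDimensional ℂ E]
    (hdim : 1 ≤ Module.finrank ℂ E)
    (Z : E →L[ℂ] E) (hZsa : IsSelfAdjoint Z)
    (ε2 : ℝ)
    (hev : Module.End.HasEigenvalue (Z : E →ₗ[ℂ] E) (ε2 : ℂ))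
    (hsimple : Module.finrank ℂ (Module.End.eigenspace (Z : E →ₗ[ℂ] E) (ε2 : ℂ)) = 1)
    (hmin : ∀ c : ℂ, Module.End.HasEigenvalue (Z : E →ₗ[ℂ] E) c → ε2 ≤ c.re)
    (hgap : ∀ c : ℂ, Module.End.HasEigenvalue (Z : E →ₗ[ℂ] E) c → c ≠ (ε2 : ℂ) →
      1 ≤ c.re - ε2)
    (P : E →L[ℂ] E)
    (hP : P = (Module.End.eigenspace (Z : E →ₗ[ℂ] E) (ε2 : ℂ)).subtypeL ∘L
      Submodule.orthogonalProjectionOnto (Module.End.eigenspace (Z : E →ₗ[ℂ] E) (ε2 : ℂ)))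
    (χ : ℝ → ℝ) (hχ0 : ∀ r, 0 ≤ χ r) (hχ1 : ∀ r, χ r ≤ 1)
    (hχone : ∀ r : ℝ, r ≤ 3 / 4 → χ r = 1)
    (δ₀ : ℝ) (hδ1 : 0 < δ₀) (hδ2 : δ₀ < π / 2)
    (c : ℝ) (hc : c = if δ₀ ≤ π / 4 then 1 else Real.sin (π - 2 * δ₀))
    (ρ₀ ρ₁ : ℝ) (hρ₀ : ρ₀ ∈ Set.Ioc (0 : ℝ) (1 / 2)) (hρ₁ : ρ₁ ∈ Set.Ioc (0 : ℝ) (1 / 2))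
    (εat : ℝ)
    (g : ℂ) (hg0 : g ≠ 0) (hgS : |g.arg| < δ₀ ∨ |(-g).arg| < δ₀)
    (hg1 : ρ₀⁻¹ * ‖g‖ ^ 2 < (1 / 4) / (‖Z‖ + c))
    (hg2 : ρ₁ * ρ₀ ≤ ‖g‖ ^ 2 * c)
    (z : ℂ) (hz : ‖z - ((εat : ℂ) + g ^ 2 * (ε2 : ℂ))‖ < ρ₀ * ρ₁ / 2)
    (X : ℝ → (E →L[ℂ] E))
    (hX : ∀ r : ℝ, X r = ((ρ₀ : ℂ))⁻¹ •
      (((εat : ℂ) - z + ((ρ₀ * r : ℝ) : ℂ)) • (1 : E →L[ℂ] E) +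
        (((χ r : ℝ) : ℂ) ^ 2 * g ^ 2) • Z)) :
    (∀ r ∈ Set.Icc (0 : ℝ) 1, ∀ η ∈ (LinearMap.range (P : E →ₗ[ℂ] E))ᗮ,
      ρ₁ / 4 * ‖η‖ ≤ ‖X r η‖) ∧
    (∀ r ∈ Set.Icc (3 * ρ₁ / 4) 1, ∀ η ∈ LinearMap.range (P : E →ₗ[ℂ] E),
      ρ₁ / 4 * ‖η‖ ≤ ‖X r η‖) :=
  free_approximation_fiber_bounds_general Z hZsa ε2 hev hgap P hP χ hχ0 hχ1 hχone δ₀ hδ1 hδ2 c hc ρ₀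
    ρ₁ hρ₀ εat g hgS hg1 hg2 z hz X hX
end
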